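/- (Theorem 4, Witt's formula for generalized Euler numbers) Let p be an odd prime, let f be an odd positive integer with p ∤ f, let χ be a Dirichlet character modulo f with values in ℚ_p, and let n ∈ ℕ. Then E_{n,χ} := lim_{N→∞} Σ_{x=0}^{f·p^N−1} (−1)^x χ(x) x^n = f^n · Σ_{a=0}^{f−1} (−1)^a χ(a) · E_n(a·f⁻¹), where E_n(z) = lim_{N→∞} Σ_{y=0}^{p^N−1} (−1)^y (z+y)^n for z ∈ ℤ_p is the n-th Euler polynomial value, and f⁻¹ is the inverse of f in ℤ_p. -/
import Mathlib


open Filter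

private lemma sum_range_mul' {M : Type*} [AddCommMonoid M] (g : ℕ → M) (m : ℕ) :
    ∀ k, ∑ x ∈ Finset.range (m * k), g x =
      ∑ j ∈ Finset.range k, ∑ y ∈ Finset.range m, g (m * j + y)
  | 0 => by simp
  | k + 1 => by
    rw [Nat.mul_succ, Finset.sum_range_add, sum_range_mul' g m k, Finset.sum_range_succ]

private lemma sum_neg_one_pow_odd {R : Type*} [Ring R] {k : ℕ} (hk : Odd k) :
    ∑ j ∈ Finset.range k, (-1 : R) ^ j = 1 := by
  obtain ⟨s, rfl⟩ := hk
  induction s with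
  | zero => simp
  | succ s ih =>
    rw [show 2 * (s + 1) + 1 = (2 * s + 1) + 1 + 1 by ring, Finset.sum_range_succ,
      Finset.sum_range_succ, ih]
    have h1 : (-1 : R) ^ (2 * s + 1) = -1 := Odd.neg_one_pow ⟨s, rfl⟩
    have h2 : (-1 : R) ^ (2 * s + 1 + 1) = 1 := Even.neg_one_pow ⟨s + 1, by ring⟩
    rw [h1, h2]; norm_num

private lemma dvd_step (p : ℕ) [Fact p.Prime] (hp : Odd p) (n : ℕ) (z : ℤ_[p]) (N : ℕ) :
    ((p : ℤ_[p]) ^ N) ∣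
      (∑ y ∈ Finset.range (p ^ (N + 1)), (-1 : ℤ_[p]) ^ y * (z + y) ^ n) -
      (∑ y ∈ Finset.range (p ^ N), (-1 : ℤ_[p]) ^ y * (z + y) ^ n) := by
  set m := p ^ N with hm_def
  have hm : Odd m := hp.pow
  set u := ∑ y ∈ Finset.range m, (-1 : ℤ_[p]) ^ y * (z + y) ^ n with hu_def
  set A : ℕ → ℤ_[p] := fun j => ∑ y ∈ Finset.range m,
    (-1 : ℤ_[p]) ^ y * (z + y + (m : ℤ_[p]) * j) ^ n with hA_def
  have h1 : ∑ y ∈ Finset.range (p ^ (N + 1)), (-1 : ℤ_[p]) ^ y * (z + y) ^ n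
      = ∑ j ∈ Finset.range p, (-1 : ℤ_[p]) ^ j * A j := by
    rw [pow_succ, sum_range_mul' (fun x => (-1 : ℤ_[p]) ^ x * (z + x) ^ n) m p]
    refine Finset.sum_congr rfl fun j _ => ?_
    rw [hA_def, Finset.mul_sum]
    refine Finset.sum_congr rfl fun y _ => ?_
    have hs : (-1 : ℤ_[p]) ^ (m * j + y) = (-1) ^ j * (-1) ^ y := by
      rw [pow_add, pow_mul, hm.neg_one_pow]
    rw [hs]
    push_cast
    ring
  have key : ∀ j : ℕ, ((p : ℤ_[p]) ^ N) ∣ (A j - u) := by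
    intro j
    rw [hA_def, hu_def, ← Finset.sum_sub_distrib]
    refine Finset.dvd_sum fun y _ => ?_
    rw [← mul_sub]
    have h2 := sub_dvd_pow_sub_pow (z + y + (m : ℤ_[p]) * j) (z + y) n
    rw [show z + (y : ℤ_[p]) + (m : ℤ_[p]) * j - (z + y) = (m : ℤ_[p]) * j by ring] at h2
    have h3 : ((p : ℤ_[p]) ^ N) ∣ (m : ℤ_[p]) * j := by
      rw [hm_def]; push_cast; exact dvd_mul_right _ _
    exact (h3.trans h2).mul_left _
  have expand : (∑ j ∈ Finset.range p, (-1 : ℤ_[p]) ^ j * A j) - u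
      = ∑ j ∈ Finset.range p, (-1 : ℤ_[p]) ^ j * (A j - u) := by
    simp only [mul_sub, Finset.sum_sub_distrib, ← Finset.sum_mul, sum_neg_one_pow_odd hp,
      one_mul]
  rw [h1, expand]
  exact Finset.dvd_sum fun j _ => (key j).mul_left _

/-- Theorem 4 (Witt's formula for generalized Euler numbers):
`E_{n,χ} = fⁿ ∑_{a=0}^{f-1} (-1)^a χ(a) Eₙ(a·f⁻¹)`, where
`E_{n,χ} = lim_N ∑_{x=0}^{f·p^N-1} (-1)^x χ(x) xⁿ`, and for `z ∈ ℤ_p`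
`Eₙ(z) = lim_N ∑_{y=0}^{p^N-1} (-1)^y (z+y)ⁿ` is the Euler polynomial value,
`f⁻¹` being the inverse of `f` in `ℤ_p`. -/
theorem witt_formula_generalized_euler (p : ℕ) [Fact p.Prime] (hp : Odd p)
    (f : ℕ) (hf : Odd f) (hf0 : 0 < f) (hpf : ¬ (p : ℕ) ∣ f)
    (finv : ℤ_[p]) (hfinv : (f : ℤ_[p]) * finv = 1)
    (χ : DirichletCharacter ℚ_[p] f) (n : ℕ) :
    ∃ (Enchi : ℚ_[p]) (E : ℤ_[p] → ℚ_[p]),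
      Tendsto
        (fun N : ℕ => ∑ x ∈ Finset.range (f * p ^ N),
          (-1 : ℚ_[p]) ^ x * χ (x : ZMod f) * (x : ℚ_[p]) ^ n)
        atTop (nhds Enchi) ∧
      (∀ z : ℤ_[p], Tendsto
        (fun N : ℕ => ∑ y ∈ Finset.range (p ^ N),
          (-1 : ℚ_[p]) ^ y * (((z + (y : ℤ_[p])) ^ n : ℤ_[p]) : ℚ_[p]))
        atTop (nhds (E z))) ∧
      Enchi = (f : ℚ_[p]) ^ n *
        ∑ a ∈ Finset.range f,
          (-1 : ℚ_[p]) ^ a * χ (a : ZMod f) * E ((a : ℤ_[p]) * finv) := by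
  classical
  set u : ℤ_[p] → ℕ → ℤ_[p] := fun (z : ℤ_[p]) (N : ℕ) =>
    ∑ y ∈ Finset.range (p ^ N), (-1 : ℤ_[p]) ^ y * (z + (y : ℤ_[p])) ^ n with hu_def
  set S : ℤ_[p] → ℕ → ℚ_[p] := fun z N =>
    ∑ y ∈ Finset.range (p ^ N),
      (-1 : ℚ_[p]) ^ y * (((z + (y : ℤ_[p])) ^ n : ℤ_[p]) : ℚ_[p]) with hS_def
  have hSu : ∀ z N, S z N = ((u z N : ℤ_[p]) : ℚ_[p]) := by
    intro z N
    rw [hS_def, hu_def]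
    simp only
    rw [show ((∑ y ∈ Finset.range (p ^ N), (-1 : ℤ_[p]) ^ y * (z + (y : ℤ_[p])) ^ n :
        ℤ_[p]) : ℚ_[p]) = ∑ y ∈ Finset.range (p ^ N),
        (((-1 : ℤ_[p]) ^ y * (z + (y : ℤ_[p])) ^ n : ℤ_[p]) : ℚ_[p]) from
      map_sum PadicInt.Coe.ringHom _ _]
    refine Finset.sum_congr rfl fun y _ => ?_
    push_cast
    ring
  have hprime : (1 : ℕ) < p := (Fact.out : p.Prime).one_lt
  have hCauchy : ∀ z : ℤ_[p], CauchySeq (S z) := by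
    intro z
    apply cauchySeq_of_le_geometric ((p : ℝ)⁻¹) 1
    · rw [inv_lt_one_iff₀]
      right
      exact_mod_cast hprime
    · intro N
      rw [dist_eq_norm, hSu, hSu, one_mul, ← PadicInt.coe_sub, ← PadicInt.norm_def]
      have hdvd : ((p : ℤ_[p]) ^ N) ∣ (u z N - u z (N + 1)) :=
        dvd_sub_comm.mp (dvd_step p hp n z N)
      have := (PadicInt.norm_le_pow_iff_mem_span_pow (u z N - u z (N + 1)) N).mpr
        (Ideal.mem_span_singleton.mpr hdvd)
      calc ‖u z N - u z (N + 1)‖ ≤ (p : ℝ) ^ (-N : ℤ) := this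
        _ = ((p : ℝ)⁻¹) ^ N := by
            rw [zpow_neg, zpow_natCast, inv_pow]
  set E : ℤ_[p] → ℚ_[p] := fun z => limUnder atTop (S z) with hE_def
  have hE : ∀ z : ℤ_[p], Tendsto (S z) atTop (nhds (E z)) := fun z =>
    (hCauchy z).tendsto_limUnder
  refine ⟨(f : ℚ_[p]) ^ n * ∑ a ∈ Finset.range f,
      (-1 : ℚ_[p]) ^ a * χ (a : ZMod f) * E ((a : ℤ_[p]) * finv), E, ?_, hE, rfl⟩
  have hT : ∀ N : ℕ, (∑ x ∈ Finset.range (f * p ^ N),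
        (-1 : ℚ_[p]) ^ x * χ (x : ZMod f) * (x : ℚ_[p]) ^ n)
      = (f : ℚ_[p]) ^ n * ∑ a ∈ Finset.range f,
        (-1 : ℚ_[p]) ^ a * χ (a : ZMod f) * S ((a : ℤ_[p]) * finv) N := by
    intro N
    rw [sum_range_mul' (fun x => (-1 : ℚ_[p]) ^ x * χ (x : ZMod f) * (x : ℚ_[p]) ^ n)
      f (p ^ N), Finset.sum_comm, Finset.mul_sum]
    refine Finset.sum_congr rfl fun a ha => ?_
    rw [hS_def]
    simp only
    rw [Finset.mul_sum, Finset.mul_sum]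
    refine Finset.sum_congr rfl fun j hj => ?_
    have hs : (-1 : ℚ_[p]) ^ (f * j + a) = (-1) ^ j * (-1) ^ a := by
      rw [pow_add, pow_mul, hf.neg_one_pow]
    have hchi : ((f * j + a : ℕ) : ZMod f) = (a : ZMod f) := by
      push_cast
      simp [ZMod.natCast_self]
    have h3 : (f : ℤ_[p]) * ((a : ℤ_[p]) * finv + (j : ℤ_[p])) = ((f * j + a : ℕ) : ℤ_[p]) := by
      have : (f : ℤ_[p]) * ((a : ℤ_[p]) * finv) = a := by
        rw [show (f : ℤ_[p]) * ((a : ℤ_[p]) * finv) = (a : ℤ_[p]) * ((f : ℤ_[p]) * finv) by ring,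
          hfinv, mul_one]
      push_cast
      rw [mul_add, this]
      ring
    have hpow : ((f * j + a : ℕ) : ℚ_[p]) ^ n
        = (f : ℚ_[p]) ^ n * ((((a : ℤ_[p]) * finv + (j : ℤ_[p])) ^ n : ℤ_[p]) : ℚ_[p]) := by
      have h4 : ((f : ℚ_[p])) * ((((a : ℤ_[p]) * finv + (j : ℤ_[p])) : ℤ_[p]) : ℚ_[p])
          = ((f * j + a : ℕ) : ℚ_[p]) := by
        calc ((f : ℚ_[p])) * ((((a : ℤ_[p]) * finv + (j : ℤ_[p])) : ℤ_[p]) : ℚ_[p])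
            = (((f : ℤ_[p]) * ((a : ℤ_[p]) * finv + (j : ℤ_[p])) : ℤ_[p]) : ℚ_[p]) := by
              push_cast; ring
          _ = ((f * j + a : ℕ) : ℚ_[p]) := by rw [h3]; push_cast; ring
      rw [← h4, mul_pow, PadicInt.coe_pow]
    rw [hs, hchi, hpow]
    ring
  have hsum : Tendsto (fun N : ℕ => (f : ℚ_[p]) ^ n * ∑ a ∈ Finset.range f,
        (-1 : ℚ_[p]) ^ a * χ (a : ZMod f) * S ((a : ℤ_[p]) * finv) N) atTop
      (nhds ((f : ℚ_[p]) ^ n * ∑ a ∈ Finset.range f,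
        (-1 : ℚ_[p]) ^ a * χ (a : ZMod f) * E ((a : ℤ_[p]) * finv))) := by
    refine Tendsto.const_mul _ ?_
    exact tendsto_finset_sum _ fun a _ => (hE _).const_mul _
  have hfun : (fun N : ℕ => ∑ x ∈ Finset.range (f * p ^ N),
      (-1 : ℚ_[p]) ^ x * χ (x : ZMod f) * (x : ℚ_[p]) ^ n)
      = fun N : ℕ => (f : ℚ_[p]) ^ n * ∑ a ∈ Finset.range f,
        (-1 : ℚ_[p]) ^ a * χ (a : ZMod f) * S ((a : ℤ_[p]) * finv) N := funext hT
  rw [hfun]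
  exact hsum
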